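/- Let T be a continuous linear operator on X. Assume that the set of points of X with precompact T-orbit (i.e., x such that {Tⁿx : n ∈ ℕ} is relatively compact in X) is dense in X, and that for every neighborhood W of 0 and every nonempty open set V ⊆ X, the set {n ∈ ℕ : Tⁿ(W) ∩ V ≠ ∅} is cofinite in ℕ. Then T is topologically mixing, i.e., for every pair (U, V) of nonempty open subsets of X, the set {n ∈ ℕ : Tⁿ(U) ∩ V ≠ ∅} is cofinite in ℕ. -/
import Mathlib


/-- Let `T` be a continuous linear operator on a separable Banach space `X` (over `ℝ` or
`ℂ`). If the points with precompact `T`-orbit are dense in `X`, and if for every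
neighborhood `W` of `0` and every nonempty open `V` the set `{n : Tⁿ(W) ∩ V ≠ ∅}` is
cofinite, then `T` is topologically mixing: for all nonempty open `U, V` the set
`{n : Tⁿ(U) ∩ V ≠ ∅}` is cofinite. -/
theorem statement10 {𝕜 : Type*} [RCLike 𝕜] {X : Type*} [NormedAddCommGroup X]
    [NormedSpace 𝕜 X] [CompleteSpace X] [TopologicalSpace.SeparableSpace X]
    (T : X →L[𝕜] X)
    (hprec : Dense {x : X | IsCompact (closure (Set.range fun n : ℕ => (T ^ n) x))})
    (h0 : ∀ W ∈ nhds (0 : X), ∀ V : Set X, IsOpen V → V.Nonempty →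
      {n : ℕ | (⇑(T ^ n) '' W ∩ V).Nonempty} ∈ Filter.cofinite) :
    ∀ U V : Set X, IsOpen U → IsOpen V → U.Nonempty → V.Nonempty →
      {n : ℕ | (⇑(T ^ n) '' U ∩ V).Nonempty} ∈ Filter.cofinite := by
  intro U V hU hV hUne hVne
  obtain ⟨x, hxK, hxU⟩ := hprec.exists_mem_open hU hUne
  obtain ⟨ε, hε, hball⟩ := Metric.isOpen_iff.1 hU x hxU
  obtain ⟨v, hvV⟩ := hVne
  obtain ⟨δ, hδ, hballv⟩ := Metric.isOpen_iff.1 hV v hvV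
  have hK : TotallyBounded (closure (Set.range fun n : ℕ => (T ^ n) x)) :=
    hxK.totallyBounded
  obtain ⟨t, htfin, htcov⟩ := (Metric.totallyBounded_iff).1 hK (δ/2) (by linarith)
  have hmem : ∀ z ∈ t,
      {n : ℕ | (⇑(T ^ n) '' Metric.ball (0:X) ε ∩ Metric.ball (v - z) (δ/2)).Nonempty} ∈
        Filter.cofinite := by
    intro z _
    exact h0 _ (Metric.ball_mem_nhds 0 hε) _ Metric.isOpen_ball
      (Metric.nonempty_ball.2 (by linarith))
  have hInter : (⋂ z ∈ t,
      {n : ℕ | (⇑(T ^ n) '' Metric.ball (0:X) ε ∩ Metric.ball (v - z) (δ/2)).Nonempty}) ∈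
        Filter.cofinite :=
    (Filter.biInter_mem htfin).2 hmem
  refine Filter.mem_of_superset hInter ?_
  intro n hn
  have hxorb : (T ^ n) x ∈ closure (Set.range fun n : ℕ => (T ^ n) x) :=
    subset_closure ⟨n, rfl⟩
  obtain ⟨z, hz, hzx⟩ := Set.mem_iUnion₂.1 (htcov hxorb)
  obtain ⟨y, ⟨w, hw, hwy⟩, hy⟩ := Set.mem_iInter₂.1 hn z hz
  refine ⟨(T ^ n) (x + w), ⟨x + w, hball ?_, rfl⟩, hballv ?_⟩
  · have hw' : ‖w‖ < ε := by simpa [Metric.mem_ball, dist_eq_norm] using hw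
    simpa [Metric.mem_ball, dist_eq_norm] using hw'
  · have hadd : (T ^ n) (x + w) = (T ^ n) x + (T ^ n) w := map_add _ _ _
    rw [Metric.mem_ball, hadd]
    have h1 : dist ((T ^ n) x) z < δ/2 := hzx
    have h2 : dist ((T ^ n) w) (v - z) < δ/2 := by rw [hwy]; exact hy
    calc dist ((T ^ n) x + (T ^ n) w) v
        ≤ dist ((T ^ n) x) z + dist ((T ^ n) w) (v - z) := by
          rw [dist_eq_norm, dist_eq_norm, dist_eq_norm]
          have hab : (T ^ n) x + (T ^ n) w - v = ((T ^ n) x - z) + ((T ^ n) w - (v - z)) := by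
            abel
          rw [hab]; exact norm_add_le _ _
      _ < δ := by linarith
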